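/- Let R be a strongly F-regular ring of characteristic p > 0, 𝔞 ⊆ R an ideal with 𝔞 ∩ R° ≠ ∅, and t > 0 a real number. Then for every integer e ≥ 0 there exists an integer e' ≥ e such that I_e(𝔞^{⌈tpᵉ⌉}, R) ⊆ I_{e'}(𝔞^{⌈tp^{e'}⌉+1}, R). -/

import Mathlib

/-!
Compose a Frobenius-linear map `φ : ᵉR → M` with a splitting `ψ : ᵈR → R` of `c ∈ 𝔞 ∩ R°`,
`ψ c = 1`: then `φ x = (φ ∘ ψ) (c x^{pᵈ})`, where `φ ∘ ψ : ᵉ⁺ᵈR → M` is again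
Frobenius-linear and `c x^{pᵈ} ∈ 𝔞^{⌈tpᵉ⌉pᵈ + 1} ⊆ 𝔞^{⌈tp^{e+d}⌉ + 1}` for `x ∈ 𝔞^{⌈tpᵉ⌉}`.
-/

section TestIdealPrelude

universe u v

open scoped TensorProduct

/-- `R°`: the set of elements of `R` not contained in any minimal prime. -/
def RCirc (R : Type u) [CommRing R] : Set R :=
  {c | ∀ P ∈ minimalPrimes R, c ∉ P}

/-- The submodule `I_e(𝔞, M) = Hom_R(ᵉR, M) · 𝔞 ⊆ M`.  An additive map `φ : R →+ M` is an
`R`-linear map `ᵉR → M` precisely when `φ (r ^ p ^ e * y) = r • φ y` for all `r, y ∈ R`. -/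
def frobIe (p e : ℕ) (R : Type u) (M : Type v) [CommRing R] [AddCommGroup M]
    [Module R M] (a : Ideal R) : Submodule R M :=
  Submodule.span R
    {m | ∃ φ : R →+ M, (∀ r y : R, φ (r ^ p ^ e * y) = r • φ y) ∧ ∃ y ∈ a, φ y = m}

/-- `R` is F-finite: `¹R` is a finitely generated `R`-module. -/
def FFinite (p : ℕ) (R : Type u) [CommRing R] : Prop :=
  ∃ (n : ℕ) (g : Fin n → R), ∀ r : R, ∃ c : Fin n → R, r = ∑ i, c i ^ p * g i

/-- `R` is strongly F-regular: it is F-finite and for every `c ∈ R°` there is `q = pᵉ`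
such that `c^{1/q} R ↪ R^{1/q}` splits, i.e. some `R`-linear map `ᵉR → R` sends `c`
to `1`. -/
def StronglyFRegular (p : ℕ) (R : Type u) [CommRing R] : Prop :=
  FFinite p R ∧ ∀ c ∈ RCirc R, ∃ (e : ℕ) (φ : R →+ R),
    (∀ r y : R, φ (r ^ p ^ e * y) = r * φ y) ∧ φ c = 1

/-- Type synonym: `R` viewed as an `R`-algebra via the `e`-th iterated Frobenius
`r ↦ r ^ p ^ e`.  For an `R`-module `M`, the base change `FrobAlg R p e ⊗[R] M` is the
Frobenius pullback `F^e(M) = M ⊗_R ᵉR` of `M`, an `R`-module via the multiplication on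
the `FrobAlg R p e` factor; `z ↦ 1 ⊗ z` is the `e`-times iterated Frobenius map of `M`,
sending `z` to `z^{pᵉ}`. -/
def FrobAlg (R : Type u) (_p _e : ℕ) : Type u := R

instance FrobAlg.instCommRing (R : Type u) [CommRing R] (p e : ℕ) :
    CommRing (FrobAlg R p e) := inferInstanceAs (CommRing R)

noncomputable instance FrobAlg.instAlgebra (R : Type u) [CommRing R] (p e : ℕ)
    [ExpChar R p] : Algebra R (FrobAlg R p e) :=
  (iterateFrobenius R p e).toAlgebra

/-- The `𝔞^t`-tight closure of the zero submodule of `M`: those `z ∈ M` for which there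
exists `c ∈ R°` with `c 𝔞^{⌈t q⌉} z^q = 0` in `F^e(M)` for all large `q = pᵉ`. -/
def tightClosureZero (p : ℕ) (R : Type u) [CommRing R] [ExpChar R p]
    (M : Type v) [AddCommGroup M] [Module R M] (a : Ideal R) (t : ℝ) : Set M :=
  {z | ∃ c ∈ RCirc R, ∃ e₀ : ℕ, ∀ e ≥ e₀, ∀ b ∈ a ^ ⌈t * (p : ℝ) ^ e⌉₊,
    ((c * b : R) : FrobAlg R p e) • ((1 : FrobAlg R p e) ⊗ₜ[R] z)
      = (0 : FrobAlg R p e ⊗[R] M)}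

/-- `N` is an essential submodule of `M`. -/
def IsEssentialSubmodule {R : Type u} [CommRing R] {M : Type v} [AddCommGroup M]
    [Module R M] (N : Submodule R M) : Prop :=
  ∀ P : Submodule R M, P ⊓ N = ⊥ → P = ⊥

/-- `E` is an injective hull of `M`: `E` is injective and contains a copy of `M` as an
essential submodule. -/
def IsInjectiveHullOf (R : Type u) [CommRing R] (E : Type v) [AddCommGroup E] [Module R E]
    (M : Type v) [AddCommGroup M] [Module R M] : Prop :=
  Module.Injective R E ∧
    ∃ f : M →ₗ[R] E, Function.Injective f ∧ IsEssentialSubmodule (LinearMap.range f)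

/-- `E ≅ ⨁_𝔪 E_R(R/𝔪)`: `E` is an internal direct sum, over all maximal ideals `𝔪` of
`R`, of injective hulls of the residue fields `R/𝔪`. -/
def IsInjectiveHullSumOfResidueFields (R : Type u) [CommRing R] (E : Type u)
    [AddCommGroup E] [Module R E] : Prop :=
  ∃ F : {I : Ideal R // I.IsMaximal} → Submodule R E,
    iSupIndep F ∧ iSup F = ⊤ ∧ ∀ m, IsInjectiveHullOf R (F m) (R ⧸ m.1)

/-- The ideal `τ̃(𝔞^t) = Ann_R (0^{*𝔞^t}_E)`, computed with respect to `E`. -/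
def tauTilde (p : ℕ) (R : Type u) [CommRing R] [ExpChar R p] (E : Type u)
    [AddCommGroup E] [Module R E] (a : Ideal R) (t : ℝ) : Ideal R :=
  (Submodule.span R (tightClosureZero p R E a t)).annihilator

/-- The generalized test ideal
`τ(𝔞^t) = ⋂_{M ⊆ E finitely generated} Ann_R (0^{*𝔞^t}_M)`, computed w.r.t. `E`. -/
def tauTest (p : ℕ) (R : Type u) [CommRing R] [ExpChar R p] (E : Type u)
    [AddCommGroup E] [Module R E] (a : Ideal R) (t : ℝ) : Ideal R :=
  ⨅ (N : Submodule R E) (_ : N.FG),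
    (Submodule.span R (tightClosureZero p R N a t)).annihilator

end TestIdealPrelude

universe w

theorem Nat.ceil_mul_natCast_le {α : Type*} [Semiring α] [LinearOrder α] [IsStrictOrderedRing α]
    [FloorSemiring α] (x : α) (n : ℕ) : ⌈x * n⌉₊ ≤ ⌈x⌉₊ * n := by
  rw [Nat.ceil_le, Nat.cast_mul]
  exact mul_le_mul_of_nonneg_right (Nat.le_ceil x) n.cast_nonneg

theorem Ideal.mul_pow_mem_pow_mul_add_one {R : Type*} [CommRing R] {a : Ideal R} {c x : R}
    {n : ℕ} (hc : c ∈ a) (hx : x ∈ a ^ n) (q : ℕ) : c * x ^ q ∈ a ^ (n * q + 1) := by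
  rw [pow_succ, pow_mul, mul_comm c]
  exact Ideal.mul_mem_mul (Ideal.pow_mem_pow hx q) hc

section FrobeniusLinear

variable {p : ℕ} {R : Type*} {M : Type*} [CommRing R] [AddCommGroup M] [Module R M]

theorem apply_mem_frobIe {e : ℕ} {b : Ideal R} {φ : R →+ M}
    (hφ : ∀ r y : R, φ (r ^ p ^ e * y) = r • φ y) {y : R} (hy : y ∈ b) :
    φ y ∈ frobIe p e R M b :=
  Submodule.subset_span ⟨φ, hφ, y, hy, rfl⟩

theorem AddMonoidHom.comp_map_pow_mul_eq_smul {e d : ℕ} {φ : R →+ M} {ψ : R →+ R}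
    (hφ : ∀ r y : R, φ (r ^ p ^ e * y) = r • φ y) (hψ : ∀ r y : R, ψ (r ^ p ^ d * y) = r * ψ y)
    (r y : R) : φ.comp ψ (r ^ p ^ (e + d) * y) = r • φ.comp ψ y := by
  rw [AddMonoidHom.comp_apply, pow_add, pow_mul, hψ, hφ, AddMonoidHom.comp_apply]

theorem frobIe_le_frobIe_add_of_map_eq_one {e d : ℕ} {b b' : Ideal R} {ψ : R →+ R} {c : R}
    (hψ : ∀ r y : R, ψ (r ^ p ^ d * y) = r * ψ y) (hψc : ψ c = 1)
    (hbb' : ∀ x ∈ b, c * x ^ p ^ d ∈ b') :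
    frobIe p e R M b ≤ frobIe p (e + d) R M b' := by
  rw [frobIe, Submodule.span_le]
  rintro _ ⟨φ, hφ, x, hx, rfl⟩
  have hx_eq : ψ (c * x ^ p ^ d) = x := by rw [mul_comm, hψ, hψc, mul_one]
  rw [← hx_eq]
  exact apply_mem_frobIe (AddMonoidHom.comp_map_pow_mul_eq_smul hφ hψ) (hbb' x hx)

end FrobeniusLinear

theorem stmt18_general {R : Type w} [CommRing R]
    (p : ℕ)
    (hSFR : StronglyFRegular p R)
    (a : Ideal R) (ha : ∃ c ∈ a, c ∈ RCirc R) (t : ℝ) :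
    ∀ e : ℕ, ∃ e' : ℕ, e ≤ e' ∧
      frobIe p e R R (a ^ ⌈t * (p : ℝ) ^ e⌉₊) ≤
        frobIe p e' R R (a ^ (⌈t * (p : ℝ) ^ e'⌉₊ + 1)) := by
  obtain ⟨c, hca, hcR⟩ := ha
  obtain ⟨d, ψ, hψ, hψc⟩ := hSFR.2 c hcR
  intro e
  refine ⟨e + d, Nat.le_add_right e d, frobIe_le_frobIe_add_of_map_eq_one hψ hψc fun x hx => ?_⟩
  have hceil : ⌈t * (p : ℝ) ^ (e + d)⌉₊ ≤ ⌈t * (p : ℝ) ^ e⌉₊ * p ^ d := by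
    simpa [pow_add, mul_assoc] using Nat.ceil_mul_natCast_le (t * (p : ℝ) ^ e) (p ^ d)
  exact Ideal.pow_le_pow_right (by omega) (Ideal.mul_pow_mem_pow_mul_add_one hca hx (p ^ d))

/-- Let `R` be a strongly F-regular ring of characteristic `p > 0`,
`𝔞 ⊆ R` an ideal with `𝔞 ∩ R° ≠ ∅`, and `t > 0` a real number.  Then for every integer
`e ≥ 0` there exists an integer `e' ≥ e` such that
`I_e(𝔞^{⌈tpᵉ⌉}, R) ⊆ I_{e'}(𝔞^{⌈tp^{e'}⌉+1}, R)`. -/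
theorem stmt18 {R : Type w} [CommRing R] [IsNoetherianRing R] [IsReduced R]
    (p : ℕ) (hp : p.Prime) [CharP R p] [ExpChar R p]
    (hSFR : StronglyFRegular p R)
    (a : Ideal R) (ha : ∃ c ∈ a, c ∈ RCirc R) (t : ℝ) (ht : 0 < t) :
    ∀ e : ℕ, ∃ e' : ℕ, e ≤ e' ∧
      frobIe p e R R (a ^ ⌈t * (p : ℝ) ^ e⌉₊) ≤
        frobIe p e' R R (a ^ (⌈t * (p : ℝ) ^ e'⌉₊ + 1)) :=
  stmt18_general p hSFR a ha t
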